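/- arXiv:2101.01024 — 2 statements merged into one kernel-verified Lean document; each statement's English description precedes it below -/
import Mathlib

section
/- Let $\mu_1, \dots, \mu_n$ be probability measures on $\mathbb{R}_+$ with finite first moments, equal means, and increasing in convex order. Let $v_{j,k} \in C_{\mathrm{lin}}(\mathbb{R}_+,\mathbb{R}_+)$ be given payoff functions, and let $\Xi \subseteq \Omega := \mathbb{R}_+^n \times \mathbb{R}_+^{n^2 N}$ be Borel. Then the set $\mathcal{M}_V(\Xi,\mu_1,\dots,\mu_n)$ of probability measures $\mathbb{Q}$ on $\Omega$ satisfying (i) $\mathbb{Q}(\Xi)=1$, (ii) the canonical process $S$ is a $\mathbb{Q}$-martingale, (iii) $\mathbb{Q} \circ S_{t_i}^{-1} = \mu_i$ for all $i$, and (iv) $\mathbb{E}_\mathbb{Q}[v_{j,k}(S_{t_j}) \mid \mathcal{F}_{t_i}] = P_{t_i}(v_{j,k})$ $\mathbb{Q}$-a.s. for all $i,j,k$, is non-empty if and only if there exists a martingale measure $\mathbb{Q}' \in \mathcal{M}(\mu_1,\dots,\mu_n)$ on $\mathbb{R}_+^n$ such that $((S_{t_1},\dots,S_{t_n}), (\mathbb{E}_{\mathbb{Q}'}[v_{j,k}(S_{t_j})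 \mid \mathcal{F}_{t_i}])_{i,j,k}) \in \Xi$ $\mathbb{Q}'$-almost surely. -/
open MeasureTheory

lemma condexp_comap_ae_eq {α β : Type*} {m : MeasurableSpace β}
    [mα : MeasurableSpace α] [mβ : MeasurableSpace β]
    (μ : Measure α) [IsProbabilityMeasure μ] {F : α → β} (hF : Measurable F)
    (hm : m ≤ mβ) {f : β → ℝ}
    (hf : Integrable f (μ.map F)) :
    (fun a => ((μ.map F)[f|m]) (F a)) =ᵐ[μ] μ[fun a => f (F a)|m.comap F] := by
  have hm' : m.comap F ≤ mα := (MeasurableSpace.comap_mono hm).trans hF.comap_le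
  haveI : IsProbabilityMeasure (μ.map F) := Measure.isProbabilityMeasure_map hF.aemeasurable
  haveI : SigmaFinite (μ.trim hm') := inferInstance
  haveI : SigmaFinite ((μ.map F).trim hm) := inferInstance
  have hFm : Measurable[m.comap F, m] F := Measurable.of_comap_le le_rfl
  have hcem : StronglyMeasurable[m] ((μ.map F)[f|m]) := stronglyMeasurable_condExp
  have hce_meas : AEStronglyMeasurable ((μ.map F)[f|m]) (μ.map F) :=
    (hcem.mono hm).aestronglyMeasurable
  have hg_int : Integrable (fun a => ((μ.map F)[f|m]) (F a)) μ := by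
    have := (integrable_map_measure hce_meas hF.aemeasurable).mp integrable_condExp
    exact this
  refine ae_eq_condExp_of_forall_setIntegral_eq hm' ?_ (fun s _ _ => hg_int.integrableOn)
    ?_ ?_
  · exact (integrable_map_measure hf.aestronglyMeasurable hF.aemeasurable).mp hf
  · rintro s ⟨B, hB, rfl⟩ _
    have hBβ : MeasurableSet B := hm _ hB
    rw [show (∫ a in F ⁻¹' B, ((μ.map F)[f|m]) (F a) ∂μ)
        = ∫ b in B, ((μ.map F)[f|m]) b ∂(μ.map F) from
      (setIntegral_map hBβ hce_meas hF.aemeasurable).symm,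
      setIntegral_condExp hm hf hB,
      setIntegral_map hBβ hf.aestronglyMeasurable hF.aemeasurable]
  · exact StronglyMeasurable.aestronglyMeasurable (hcem.comp_measurable hFm)

lemma integrable_comp_coord {n : ℕ} (ρ : Measure (Fin n → ℝ)) (ν : Measure ℝ) (j : Fin n)
    (hmarg : ρ.map (fun s => s j) = ν) (φ : ℝ → ℝ) (hφ : Integrable φ ν) :
    Integrable (fun s => φ (s j)) ρ := by
  have h1 : Integrable φ (ρ.map (fun s => s j)) := by rw [hmarg]; exact hφ
  exact (integrable_map_measure h1.aestronglyMeasurable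
    (measurable_pi_apply j).aemeasurable).mp h1

lemma integrable_v {ν : Measure ℝ} [IsFiniteMeasure ν] (hνpos : ν (Set.Iio 0) = 0)
    (hνmom : Integrable (fun x => x) ν) (v : ℝ → ℝ) (hc : Continuous v)
    (h0 : ∀ x, 0 ≤ v x) {C : ℝ} (hC : ∀ x : ℝ, 0 ≤ x → v x ≤ C * (1 + x)) :
    Integrable v ν := by
  have hpos : ∀ᵐ x ∂ν, 0 ≤ x := by
    rw [ae_iff]
    convert hνpos using 2
    ext x; simp [Set.Iio, not_le]
  have hg : Integrable (fun x => C * (1 + |x|)) ν :=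
    (((integrable_const (1 : ℝ)).add hνmom.abs).const_mul C)
  refine Integrable.mono' hg hc.aestronglyMeasurable ?_
  filter_upwards [hpos] with x hx
  rw [Real.norm_eq_abs, abs_of_nonneg (h0 x), abs_of_nonneg hx]
  exact hC x hx

/-- Theorem 2.1(a): the set `𝓜_V(Ξ, μ₁,…,μₙ)` is non-empty if and only if there exists a
martingale measure `Q' ∈ 𝓜(μ₁,…,μₙ)` on `ℝ₊ⁿ` whose path together with the conditional
expectations of the traded payoffs lies a.s. in `Ξ`. -/
theorem MV_nonempty_iff
    {n N : ℕ}
    (μ : Fin n → Measure ℝ) (hμprob : ∀ i, IsProbabilityMeasure (μ i))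
    (hμpos : ∀ i, (μ i) (Set.Iio 0) = 0)
    (hμmom : ∀ i, Integrable (fun x => x) (μ i))
    (s₀ : ℝ) (hs₀ : 0 ≤ s₀) (hmean : ∀ i, ∫ x, x ∂(μ i) = s₀)
    (hconvord : ∀ φ : ℝ → ℝ, ConvexOn ℝ Set.univ φ → (∀ i, Integrable φ (μ i)) →
      ∀ i j : Fin n, i ≤ j → ∫ x, φ x ∂(μ i) ≤ ∫ x, φ x ∂(μ j))
    (v : Fin n → Fin N → ℝ → ℝ)
    (hvcont : ∀ j k, Continuous (v j k)) (hv0 : ∀ j k x, 0 ≤ v j k x)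
    (hvlin : ∀ j k, ∃ C : ℝ, ∀ x : ℝ, 0 ≤ x → v j k x ≤ C * (1 + x))
    (Ξ : Set ((Fin n → ℝ) × (Fin n → Fin n → Fin N → ℝ))) (hΞ : MeasurableSet Ξ)
    -- the filtration on the product space generated by the first `i` stock coordinates
    (𝒢 : Fin n → MeasurableSpace ((Fin n → ℝ) × (Fin n → Fin n → Fin N → ℝ)))
    (h𝒢 : ∀ i, 𝒢 i = MeasurableSpace.comap
      (fun ω (l : {l : Fin n // l ≤ i}) => ω.1 l.1) inferInstance)
    -- the filtration on the path space `ℝ₊ⁿ`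
    (ℱ : Fin n → MeasurableSpace (Fin n → ℝ))
    (hℱ : ∀ i, ℱ i = MeasurableSpace.comap
      (fun (s : Fin n → ℝ) (l : {l : Fin n // l ≤ i}) => s l.1) inferInstance) :
    (∃ Q : Measure ((Fin n → ℝ) × (Fin n → Fin n → Fin N → ℝ)),
      IsProbabilityMeasure Q ∧
      Q Ξ = 1 ∧
      (∀ i j : Fin n, i ≤ j →
        (Q[fun ω => ω.1 j|𝒢 i]) =ᵐ[Q] fun ω => ω.1 i) ∧
      (∀ i : Fin n, Q.map (fun ω => ω.1 i) = μ i) ∧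
      (∀ i j : Fin n, ∀ k : Fin N,
        (Q[fun ω => v j k (ω.1 j)|𝒢 i]) =ᵐ[Q] fun ω => ω.2 i j k)) ↔
    (∃ Q' : Measure (Fin n → ℝ),
      IsProbabilityMeasure Q' ∧
      (∀ i j : Fin n, i ≤ j →
        (Q'[fun s => s j|ℱ i]) =ᵐ[Q'] fun s => s i) ∧
      (∀ i : Fin n, Q'.map (fun s => s i) = μ i) ∧
      (∀ᵐ s ∂Q',
        (s, fun i j k => (Q'[fun s' => v j k (s' j)|ℱ i]) s) ∈ Ξ)) := by
  -- basic σ-algebra facts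
  have hℱle : ∀ i, ℱ i ≤ (inferInstance : MeasurableSpace (Fin n → ℝ)) := by
    intro i
    rw [hℱ i]
    exact Measurable.comap_le (measurable_pi_lambda _ fun l => measurable_pi_apply l.1)
  have hGF : ∀ i, 𝒢 i = (ℱ i).comap Prod.fst := by
    intro i
    rw [h𝒢 i, hℱ i, MeasurableSpace.comap_comp]
    rfl
  have h𝒢le : ∀ i, 𝒢 i ≤ (inferInstance :
      MeasurableSpace ((Fin n → ℝ) × (Fin n → Fin n → Fin N → ℝ))) := by
    intro i
    rw [hGF i]
    exact (MeasurableSpace.comap_mono (hℱle i)).trans measurable_fst.comap_le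
  constructor
  · rintro ⟨Q, hQprob, hQΞ, hQmart, hQmarg, hQP⟩
    set Q' : Measure (Fin n → ℝ) := Q.map Prod.fst with hQ'def
    haveI : IsProbabilityMeasure Q' := Measure.isProbabilityMeasure_map measurable_fst.aemeasurable
    have hmarg : ∀ i, Q'.map (fun s => s i) = μ i := by
      intro i
      rw [hQ'def, Measure.map_map (measurable_pi_apply i) measurable_fst]
      exact hQmarg i
    have hcoordint : ∀ j : Fin n, Integrable (fun s : Fin n → ℝ => s j) Q' :=
      fun j => integrable_comp_coord Q' (μ j) j (hmarg j) _ (hμmom j)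
    have hvint : ∀ j k, Integrable (fun s : Fin n → ℝ => v j k (s j)) Q' := by
      intro j k
      obtain ⟨C, hC⟩ := hvlin j k
      haveI := hμprob j
      exact integrable_comp_coord Q' (μ j) j (hmarg j) _
        (integrable_v (hμpos j) (hμmom j) _ (hvcont j k) (hv0 j k) hC)
    -- transfer of conditional expectations
    have hkey : ∀ (i : Fin n) (f : (Fin n → ℝ) → ℝ), Integrable f Q' →
        (fun ω : (Fin n → ℝ) × (Fin n → Fin n → Fin N → ℝ) => (Q'[f|ℱ i]) ω.1)
          =ᵐ[Q] Q[fun ω => f ω.1|𝒢 i] := by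
      intro i f hf
      have := condexp_comap_ae_eq (m := ℱ i) Q measurable_fst (hℱle i) hf
      rw [← hGF i] at this
      exact this
    refine ⟨Q', inferInstance, ?_, hmarg, ?_⟩
    · intro i j hij
      have h1 := (hkey i _ (hcoordint j)).trans (hQmart i j hij)
      have hset : MeasurableSet {s : Fin n → ℝ | (Q'[fun s => s j|ℱ i]) s = s i} :=
        measurableSet_eq_fun ((stronglyMeasurable_condExp (m := ℱ i)).mono (hℱle i)).measurable
          (measurable_pi_apply i)
      exact (ae_map_iff measurable_fst.aemeasurable hset).mpr h1
    · -- a.s. membership in Ξ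
      set g : (Fin n → ℝ) → (Fin n → Fin n → Fin N → ℝ) :=
        fun s i j k => (Q'[fun s' => v j k (s' j)|ℱ i]) s with hg
      have hgmeas : Measurable g := by
        refine measurable_pi_lambda _ fun i => measurable_pi_lambda _ fun j =>
          measurable_pi_lambda _ fun k => ?_
        exact ((stronglyMeasurable_condExp (m := ℱ i)).mono (hℱle i)).measurable
      have hae2 : ∀ᵐ ω ∂Q, ∀ i j k, ω.2 i j k = g ω.1 i j k := by
        rw [ae_all_iff]; intro i
        rw [ae_all_iff]; intro j
        rw [ae_all_iff]; intro k
        have h1 := ((hQP i j k).symm.trans (hkey i _ (hvint j k)).symm)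
        filter_upwards [h1] with ω hω using hω
      have haeΞ : ∀ᵐ ω ∂Q, ω ∈ Ξ := by
        rw [ae_iff]
        have : Q Ξᶜ = 0 := (prob_compl_eq_zero_iff hΞ).mpr hQΞ
        simpa [Set.compl_def] using this
      have hae3 : ∀ᵐ ω ∂Q, (ω.1, g ω.1) ∈ Ξ := by
        filter_upwards [hae2, haeΞ] with ω h2 hΞω
        have : g ω.1 = ω.2 := by
          funext i j k; exact (h2 i j k).symm
        rw [this]
        exact hΞω
      have hset : MeasurableSet {s : Fin n → ℝ | (s, g s) ∈ Ξ} :=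
        (measurable_id.prodMk hgmeas) hΞ
      exact (ae_map_iff measurable_fst.aemeasurable hset).mpr hae3
  · rintro ⟨Q', hQ'prob, hQ'mart, hQ'marg, hQ'Ξ⟩
    set g : (Fin n → ℝ) → (Fin n → Fin n → Fin N → ℝ) :=
      fun s i j k => (Q'[fun s' => v j k (s' j)|ℱ i]) s with hg
    have hgmeas : Measurable g := by
      refine measurable_pi_lambda _ fun i => measurable_pi_lambda _ fun j =>
        measurable_pi_lambda _ fun k => ?_
      exact ((stronglyMeasurable_condExp (m := ℱ i)).mono (hℱle i)).measurable
    set F : (Fin n → ℝ) → (Fin n → ℝ) × (Fin n → Fin n → Fin N → ℝ) :=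
      fun s => (s, g s) with hF
    have hFmeas : Measurable F := measurable_id.prodMk hgmeas
    set Q : Measure ((Fin n → ℝ) × (Fin n → Fin n → Fin N → ℝ)) := Q'.map F with hQdef
    haveI : IsProbabilityMeasure Q := Measure.isProbabilityMeasure_map hFmeas.aemeasurable
    have hcomapF : ∀ i, (𝒢 i).comap F = ℱ i := by
      intro i
      rw [h𝒢 i, MeasurableSpace.comap_comp, hℱ i]
      rfl
    have hcoordint : ∀ j : Fin n, Integrable (fun s : Fin n → ℝ => s j) Q' :=
      fun j => integrable_comp_coord Q' (μ j) j (hQ'marg j) _ (hμmom j)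
    have hvint : ∀ j k, Integrable (fun s : Fin n → ℝ => v j k (s j)) Q' := by
      intro j k
      obtain ⟨C, hC⟩ := hvlin j k
      haveI := hμprob j
      exact integrable_comp_coord Q' (μ j) j (hQ'marg j) _
        (integrable_v (hμpos j) (hμmom j) _ (hvcont j k) (hv0 j k) hC)
    -- transfer of conditional expectations
    have hkey : ∀ (i : Fin n) (f : ((Fin n → ℝ) × (Fin n → Fin n → Fin N → ℝ)) → ℝ),
        Measurable f → Integrable (fun s => f (F s)) Q' →
        (fun s => (Q[f|𝒢 i]) (F s)) =ᵐ[Q'] Q'[fun s => f (F s)|ℱ i] := by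
      intro i f hfmeas hf
      have hfQ : Integrable f Q := by
        rw [hQdef]
        exact (integrable_map_measure hfmeas.aestronglyMeasurable hFmeas.aemeasurable).mpr hf
      have := condexp_comap_ae_eq (m := 𝒢 i) Q' hFmeas (h𝒢le i) hfQ
      rw [hcomapF i] at this
      exact this
    refine ⟨Q, inferInstance, ?_, ?_, ?_, ?_⟩
    · -- Q Ξ = 1
      have h1 : Q' (F ⁻¹' Ξ)ᶜ = 0 := ae_iff.mp hQ'Ξ
      have h2 : Q' (F ⁻¹' Ξ) = 1 := (prob_compl_eq_zero_iff (hFmeas hΞ)).mp h1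
      show (Q'.map F) Ξ = 1
      rw [Measure.map_apply hFmeas hΞ]
      exact h2
    · -- martingale property
      intro i j hij
      have h1 : (fun s => (Q[fun ω => ω.1 j|𝒢 i]) (F s)) =ᵐ[Q'] fun s => s i :=
        (hkey i (fun ω => ω.1 j) ((measurable_pi_apply j).comp measurable_fst)
          (hcoordint j)).trans (hQ'mart i j hij)
      have hset : MeasurableSet {ω : (Fin n → ℝ) × (Fin n → Fin n → Fin N → ℝ) |
          (Q[fun ω => ω.1 j|𝒢 i]) ω = ω.1 i} :=
        measurableSet_eq_fun ((stronglyMeasurable_condExp (m := 𝒢 i)).mono (h𝒢le i)).measurable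
          ((measurable_pi_apply i).comp measurable_fst)
      exact (ae_map_iff hFmeas.aemeasurable hset).mpr h1
    · -- marginals
      intro i
      have hg1 : Measurable (fun ω : (Fin n → ℝ) × (Fin n → Fin n → Fin N → ℝ) => ω.1 i) :=
        (measurable_pi_apply i).comp measurable_fst
      rw [Measure.map_map hg1 hFmeas]
      exact hQ'marg i
    · -- conditional expectations of payoffs
      intro i j k
      have h1 : (fun s => (Q[fun ω => v j k (ω.1 j)|𝒢 i]) (F s)) =ᵐ[Q']
          fun s => g s i j k :=
        hkey i (fun ω => v j k (ω.1 j))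
          ((hvcont j k).measurable.comp ((measurable_pi_apply j).comp measurable_fst))
          (hvint j k)
      have hset : MeasurableSet {ω : (Fin n → ℝ) × (Fin n → Fin n → Fin N → ℝ) |
          (Q[fun ω => v j k (ω.1 j)|𝒢 i]) ω = ω.2 i j k} :=
        measurableSet_eq_fun ((stronglyMeasurable_condExp (m := 𝒢 i)).mono (h𝒢le i)).measurable
          (((measurable_pi_apply k).comp ((measurable_pi_apply j).comp
            ((measurable_pi_apply i).comp measurable_snd))))
      exact (ae_map_iff hFmeas.aemeasurable hset).mpr h1
end

section
/- Let $\mu_1,\dots,\mu_n$ be probability measures on $\mathbb{R}_+$ with finite first moments, let $(\mathbb{Q}^{(N)})_{N \in \mathbb{N}}$ be martingale measures in $\mathcal{M}(\mu_1,\dots,\mu_n)$ converging weakly to $\mathbb{Q}$, let $v \in C_{\mathrm{lin}}(\mathbb{R}_+,\mathbb{R}_+)$, and fix $i \leq j$. Suppose $g^{(N)} : \mathbb{R}_+ \to \mathbb{R}_+$ are $1$-Lipschitz with $g^{(N)}(0)=0$, satisfy $g^{(N)}(S_i) = \mathbb{E}_{\mathbb{Q}^{(N)}}[v(S_j) \mid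 S_i]$ $\mathbb{Q}^{(N)}$-a.s., and converge uniformly on compacts to $g$. Then $\mathbb{Q} \in \mathcal{M}(\mu_1,\dots,\mu_n)$ and $g(S_i) = \mathbb{E}_{\mathbb{Q}}[v(S_j) \mid S_i]$ $\mathbb{Q}$-a.s. -/
/-!
Everything is tested against bounded continuous functions. The marginals of `Q` are weak limits
of the fixed marginals `μᵢ`. An identity `E[Y | π] = φ ∘ π` is equivalent to
`∫ f(π) Y = ∫ f(π) φ(π)` for all bounded continuous `f`, and under `QN m` both sides pass to the
limit: the integrands grow at most linearly in single coordinates whose laws `μᵢ` do not depend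
on `m`, so truncating them at a level `K` costs an error bounded uniformly in `m` by a tail
integral of `μᵢ`. For the pricing functions, `∫ f(Sᵢ) (gN m - g)(Sᵢ) dQN m` is at most
`‖f‖ ∫ |gN m - g| dμᵢ`, which tends to zero by dominated convergence since `|gN m x| ≤ |x|`.
-/

open MeasureTheory Filter Topology

theorem abs_max_sub_zero_le {a K : ℝ} (hK : 0 ≤ K) : |max (a - K) 0| ≤ |a| := by
  rw [abs_of_nonneg (le_max_right _ _)]
  exact max_le (by linarith [le_abs_self a]) (abs_nonneg a)

theorem abs_clamp_le {x K : ℝ} (hK : 0 ≤ K) : |max (-K) (min K x)| ≤ min K |x| := by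
  rw [le_min_iff, abs_le, abs_le]
  refine ⟨⟨le_max_left _ _, max_le (by linarith) (min_le_left _ _)⟩, ?_⟩
  cases abs_cases x <;> cases max_cases (-K) (min K x) <;> cases min_cases K x <;>
    constructor <;> linarith

theorem abs_sub_clamp_le {x K b : ℝ} (hx : |x| ≤ b) :
    |x - max (-K) (min K x)| ≤ max (b - K) 0 := by
  rw [abs_le] at hx ⊢
  constructor <;> cases max_cases (-K) (min K x) <;> cases min_cases K x <;>
    cases max_cases (b - K) 0 <;> linarith

theorem integrable_of_le_linear {μ : Measure ℝ} [IsFiniteMeasure μ]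
    (hμ : Integrable (fun x => x) μ) (hμpos : ∀ᵐ x ∂μ, 0 ≤ x) {v : ℝ → ℝ}
    (hv : AEStronglyMeasurable v μ) (hv0 : ∀ x, 0 ≤ v x) {C : ℝ}
    (hC : ∀ x, 0 ≤ x → v x ≤ C * (1 + x)) : Integrable v μ := by
  refine (((integrable_const 1).add hμ).const_mul C).mono' hv ?_
  filter_upwards [hμpos] with x hx
  rw [Real.norm_eq_abs, abs_of_nonneg (hv0 x)]
  exact hC x hx

section Integrals

variable {α : Type*} [MeasurableSpace α] {μ : Measure α}

theorem MeasureTheory.Integrable.max_sub_const_zero {φ : α → ℝ} (hφ : Integrable φ μ) {K : ℝ}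
    (hK : 0 ≤ K) : Integrable (fun x => max (φ x - K) 0) μ :=
  hφ.abs.mono' ((hφ.aestronglyMeasurable.sub aestronglyMeasurable_const).sup
    aestronglyMeasurable_const) (.of_forall fun _ => abs_max_sub_zero_le hK)

theorem tendsto_integral_max_sub_zero_atTop {φ : α → ℝ} (hφ : Integrable φ μ) :
    Tendsto (fun K : ℝ => ∫ x, max (φ x - K) 0 ∂μ) atTop (𝓝 0) := by
  have h := tendsto_integral_filter_of_dominated_convergence (l := atTop)
    (F := fun K x => max (φ x - K) 0) (f := fun _ => 0) (fun x => |φ x|)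
    (eventually_ge_atTop 0 |>.mono fun K hK => (hφ.max_sub_const_zero hK).aestronglyMeasurable)
    (eventually_ge_atTop 0 |>.mono fun K hK => .of_forall fun x => abs_max_sub_zero_le hK)
    hφ.abs (.of_forall fun x => tendsto_const_nhds.congr' ?_)
  · rwa [integral_zero] at h
  · filter_upwards [eventually_ge_atTop (φ x)] with K hK
    exact (max_eq_right (by linarith)).symm

theorem tendsto_integral_norm_sub_of_dominated {g : ℕ → α → ℝ} {g₀ : α → ℝ}
    (hg : ∀ m, AEStronglyMeasurable (g m) μ)
    (hlim : ∀ᵐ x ∂μ, Tendsto (fun m => g m x) atTop (𝓝 (g₀ x))) {b : α → ℝ}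
    (hb : Integrable b μ) (hgb : ∀ m x, ‖g m x‖ ≤ b x) (hg₀b : ∀ x, ‖g₀ x‖ ≤ b x) :
    Tendsto (fun m => ∫ x, ‖g m x - g₀ x‖ ∂μ) atTop (𝓝 0) := by
  have hg₀ : AEStronglyMeasurable g₀ μ := aestronglyMeasurable_of_tendsto_ae atTop hg hlim
  have h := tendsto_integral_of_dominated_convergence (F := fun m x => ‖g m x - g₀ x‖)
    (f := fun _ => 0) (fun x => 2 * b x) (fun m => ((hg m).sub hg₀).norm) (hb.const_mul 2)
    (fun m => .of_forall fun x => ?_) (hlim.mono fun x hx => ?_)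
  · rwa [integral_zero] at h
  · rw [norm_norm]
    linarith [norm_sub_le (g m x) (g₀ x), hgb m x, hg₀b x]
  · simpa using (hx.sub_const (g₀ x)).norm

theorem MeasureTheory.Integrable.comp_of_map_eq {Ω : Type*} [MeasurableSpace Ω]
    {P : Measure Ω} {X : Ω → α} (hX : Measurable X) (hPX : P.map X = μ) {w : α → ℝ}
    (hw : Integrable w μ) : Integrable (fun s => w (X s)) P :=
  (hPX ▸ hw).comp_measurable hX

end Integrals

section TestFunctions

variable {Ω E : Type*} [MeasurableSpace Ω] [TopologicalSpace E] [MeasurableSpace E]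

theorem MeasureTheory.Integrable.bcf_comp_mul [OpensMeasurableSpace E] {Q : Measure Ω}
    {Y : Ω → ℝ} (hY : Integrable Y Q) (f : BoundedContinuousFunction E ℝ) {π : Ω → E}
    (hπ : Measurable π) : Integrable (fun s => f (π s) * Y s) Q :=
  hY.bdd_mul (f.continuous.measurable.comp hπ).aestronglyMeasurable
    (.of_forall fun _ => f.norm_coe_le_norm _)

theorem integral_map_withDensity_ofReal [OpensMeasurableSpace E] {Q : Measure Ω} {π : Ω → E}
    (hπ : Measurable π) {w : Ω → ℝ} (hw : AEMeasurable w Q) (f : BoundedContinuousFunction E ℝ) :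
    ∫ x, f x ∂(Q.withDensity fun s => ENNReal.ofReal (w s)).map π
      = ∫ s, f (π s) * max (w s) 0 ∂Q := by
  rw [integral_map hπ.aemeasurable f.continuous.aestronglyMeasurable,
    integral_withDensity_eq_integral_toReal_smul₀ hw.ennreal_ofReal
      (.of_forall fun _ => ENNReal.ofReal_lt_top)]
  simp only [ENNReal.toReal_ofReal', smul_eq_mul, mul_comm]

theorem setIntegral_preimage_eq_zero_of_forall_integral_bcf_mul_eq_zero [HasOuterApproxClosed E]
    [BorelSpace E] {Q : Measure Ω} {π : Ω → E} (hπ : Measurable π) {w : Ω → ℝ}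
    (hw : Integrable w Q) (h : ∀ f : BoundedContinuousFunction E ℝ, ∫ s, f (π s) * w s ∂Q = 0)
    {B : Set E} (hB : MeasurableSet B) :
    ∫ s in π ⁻¹' B, w s ∂Q = 0 := by
  have hw' : Integrable (fun s => -w s) Q := hw.neg
  have : IsFiniteMeasure (Q.withDensity fun s => ENNReal.ofReal (w s)) :=
    isFiniteMeasure_withDensity_ofReal hw.2
  have : IsFiniteMeasure (Q.withDensity fun s => ENNReal.ofReal (-w s)) :=
    isFiniteMeasure_withDensity_ofReal hw'.2
  have hν : (Q.withDensity fun s => ENNReal.ofReal (w s)).map π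
      = (Q.withDensity fun s => ENNReal.ofReal (-w s)).map π := by
    refine ext_of_forall_integral_eq_of_IsFiniteMeasure fun f => ?_
    rw [integral_map_withDensity_ofReal hπ hw.aemeasurable,
      integral_map_withDensity_ofReal hπ hw'.aemeasurable, ← sub_eq_zero,
      ← integral_sub (hw.pos_part.bcf_comp_mul f hπ) (hw'.pos_part.bcf_comp_mul f hπ)]
    simpa only [← mul_sub, max_zero_sub_max_neg_zero_eq_self] using h f
  rw [integral_eq_lintegral_pos_part_sub_lintegral_neg_part hw.restrict, sub_eq_zero,
    ← withDensity_apply _ (hπ hB), ← withDensity_apply _ (hπ hB), ← Measure.map_apply hπ hB,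
    ← Measure.map_apply hπ hB, hν]

theorem condExp_comap_ae_eq_of_forall_integral_bcf_mul_eq [HasOuterApproxClosed E]
    [BorelSpace E] {Q : Measure Ω} [IsFiniteMeasure Q] {π : Ω → E} (hπ : Measurable π)
    {Y : Ω → ℝ} {φ : E → ℝ} (hY : Integrable Y Q) (hφ : Measurable φ)
    (hφπ : Integrable (fun s => φ (π s)) Q)
    (h : ∀ f : BoundedContinuousFunction E ℝ,
      ∫ s, f (π s) * Y s ∂Q = ∫ s, f (π s) * φ (π s) ∂Q) :
    Q[Y | MeasurableSpace.comap π inferInstance] =ᵐ[Q] fun s => φ (π s) := by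
  refine (ae_eq_condExp_of_forall_setIntegral_eq hπ.comap_le hY
    (fun _ _ _ => hφπ.integrableOn) ?_ (hφ.comp (comap_measurable π)).aestronglyMeasurable).symm
  rintro _ ⟨B, hB, rfl⟩ -
  rw [← sub_eq_zero, ← integral_sub hφπ.integrableOn hY.integrableOn]
  refine setIntegral_preimage_eq_zero_of_forall_integral_bcf_mul_eq_zero hπ (hφπ.sub hY)
    (fun f => ?_) hB
  simp only [Pi.sub_apply, mul_sub]
  rw [integral_sub (hφπ.bcf_comp_mul f hπ) (hY.bcf_comp_mul f hπ), h f, sub_self]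

theorem integral_bcf_comp_mul_eq_of_condExp_ae_eq [OpensMeasurableSpace E] {P : Measure Ω}
    [IsFiniteMeasure P] {π : Ω → E} (hπ : Measurable π) {Y Z : Ω → ℝ} (hY : Integrable Y P)
    (hYZ : P[Y | MeasurableSpace.comap π inferInstance] =ᵐ[P] Z)
    (f : BoundedContinuousFunction E ℝ) :
    ∫ s, f (π s) * Y s ∂P = ∫ s, f (π s) * Z s ∂P := by
  have hf : StronglyMeasurable[MeasurableSpace.comap π inferInstance] fun s => f (π s) :=
    (f.continuous.measurable.comp (comap_measurable π)).stronglyMeasurable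
  calc ∫ s, f (π s) * Y s ∂P
      = ∫ s, (P[(fun s => f (π s)) * Y | MeasurableSpace.comap π inferInstance]) s ∂P :=
        (integral_condExp hπ.comap_le).symm
    _ = ∫ s, f (π s) * Z s ∂P := integral_congr_ae <|
        (condExp_stronglyMeasurable_mul_of_bound hπ.comap_le hf hY ‖f‖
          (.of_forall fun _ => f.norm_coe_le_norm _)).trans (EventuallyEq.rfl.mul hYZ)

theorem condExp_comap_ae_eq_of_tendsto [HasOuterApproxClosed E] [BorelSpace E]
    {P : ℕ → Measure Ω} [∀ m, IsFiniteMeasure (P m)] {Q : Measure Ω} [IsFiniteMeasure Q]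
    {π : Ω → E} (hπ : Measurable π) {Y : Ω → ℝ} (hYP : ∀ m, Integrable Y (P m))
    (hYQ : Integrable Y Q) {Z : ℕ → Ω → ℝ}
    (hPZ : ∀ m, (P m)[Y | MeasurableSpace.comap π inferInstance] =ᵐ[P m] Z m) {φ : E → ℝ}
    (hφ : Measurable φ) (hφπ : Integrable (fun s => φ (π s)) Q)
    (hYlim : ∀ f : BoundedContinuousFunction E ℝ,
      Tendsto (fun m => ∫ s, f (π s) * Y s ∂P m) atTop (𝓝 (∫ s, f (π s) * Y s ∂Q)))
    (hZlim : ∀ f : BoundedContinuousFunction E ℝ,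
      Tendsto (fun m => ∫ s, f (π s) * Z m s ∂P m) atTop (𝓝 (∫ s, f (π s) * φ (π s) ∂Q))) :
    Q[Y | MeasurableSpace.comap π inferInstance] =ᵐ[Q] fun s => φ (π s) :=
  condExp_comap_ae_eq_of_forall_integral_bcf_mul_eq hπ hYQ hφ hφπ fun f =>
    tendsto_nhds_unique ((hYlim f).congr fun m =>
      integral_bcf_comp_mul_eq_of_condExp_ae_eq hπ (hYP m) (hPZ m) f) (hZlim f)

theorem tendsto_dist_integral_bcf_comp_mul_comp [OpensMeasurableSpace E] {α : Type*}
    [MeasurableSpace α] {P : ℕ → Measure Ω} {π : Ω → E} (hπ : Measurable π)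
    (f : BoundedContinuousFunction E ℝ) {X : Ω → α} (hX : Measurable X) {μ : Measure α}
    (hPX : ∀ m, (P m).map X = μ) {g : ℕ → α → ℝ} {g₀ : α → ℝ}
    (hg : ∀ m, AEStronglyMeasurable (g m) μ)
    (hlim : ∀ᵐ x ∂μ, Tendsto (fun m => g m x) atTop (𝓝 (g₀ x))) {b : α → ℝ}
    (hb : Integrable b μ) (hgb : ∀ m x, ‖g m x‖ ≤ b x) (hg₀b : ∀ x, ‖g₀ x‖ ≤ b x) :
    Tendsto (fun m => dist (∫ s, f (π s) * g₀ (X s) ∂P m) (∫ s, f (π s) * g m (X s) ∂P m))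
      atTop (𝓝 0) := by
  have hg₀ : AEStronglyMeasurable g₀ μ := aestronglyMeasurable_of_tendsto_ae atTop hg hlim
  have hgi : ∀ m, Integrable (g m) μ := fun m => hb.mono' (hg m) (.of_forall (hgb m))
  have hg₀i : Integrable g₀ μ := hb.mono' hg₀ (.of_forall hg₀b)
  have hint : ∀ m {v : α → ℝ}, Integrable v μ →
      Integrable (fun s => f (π s) * v (X s)) (P m) :=
    fun m v hv => (hv.comp_of_map_eq hX (hPX m)).bcf_comp_mul f hπ
  refine squeeze_zero (fun _ => dist_nonneg) (fun m => ?_)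
    (by simpa using (tendsto_integral_norm_sub_of_dominated hg hlim hb hgb hg₀b).const_mul ‖f‖)
  rw [dist_eq_norm, ← integral_sub (hint m hg₀i) (hint m (hgi m))]
  calc ‖∫ s, f (π s) * g₀ (X s) - f (π s) * g m (X s) ∂P m‖
      ≤ ∫ s, ‖f‖ * ‖g m (X s) - g₀ (X s)‖ ∂P m := by
        refine norm_integral_le_of_norm_le
          ((((hgi m).sub hg₀i).norm.comp_of_map_eq hX (hPX m)).const_mul ‖f‖)
          (.of_forall fun s => ?_)
        rw [← mul_sub, norm_mul, norm_sub_rev]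
        exact mul_le_mul_of_nonneg_right (f.norm_coe_le_norm _) (norm_nonneg _)
    _ = ‖f‖ * ∫ x, ‖g m x - g₀ x‖ ∂μ := by
        rw [integral_const_mul, ← hPX m,
          integral_map hX.aemeasurable (hPX m ▸ ((hg m).sub hg₀).norm)]

end TestFunctions

section WeakLimits

variable {Ω E α : Type*} [MeasurableSpace Ω] [TopologicalSpace Ω] [OpensMeasurableSpace Ω]
  [TopologicalSpace E] [MeasurableSpace α] {P : ℕ → Measure Ω} {Q : Measure Ω}
  (hweak : ∀ f : BoundedContinuousFunction Ω ℝ,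
    Tendsto (fun m => ∫ s, f s ∂P m) atTop (𝓝 (∫ s, f s ∂Q)))
include hweak

theorem tendsto_integral_of_abs_le_comp {X : Ω → α} (hX : Measurable X) {μ : Measure α}
    (hPX : ∀ m, (P m).map X = μ) (hQX : Q.map X = μ) {φ : α → ℝ} (hφ : Integrable φ μ)
    {F : Ω → ℝ} (hF : Continuous F) (hFφ : ∀ s, |F s| ≤ φ (X s)) :
    Tendsto (fun m => ∫ s, F s ∂P m) atTop (𝓝 (∫ s, F s ∂Q)) := by
  -- the truncation error depends on `ν` only through the law `μ` of `X`
  have htrunc : ∀ ν : Measure Ω, ν.map X = μ → ∀ K, 0 ≤ K →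
      dist (∫ s, F s ∂ν) (∫ s, max (-K) (min K (F s)) ∂ν) ≤ ∫ x, max (φ x - K) 0 ∂μ := by
    rintro ν rfl K hK
    have hFν : Integrable F ν :=
      (hφ.comp_measurable hX).mono' hF.aestronglyMeasurable (.of_forall hFφ)
    have hFKν : Integrable (fun s => max (-K) (min K (F s))) ν :=
      hFν.mono (by fun_prop) (.of_forall fun s => (abs_clamp_le hK).trans (min_le_right _ _))
    rw [dist_eq_norm, ← integral_sub hFν hFKν, integral_map hX.aemeasurable
      (hφ.max_sub_const_zero hK).aestronglyMeasurable]
    exact norm_integral_le_of_norm_le ((hφ.max_sub_const_zero hK).comp_measurable hX)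
      (.of_forall fun s => abs_sub_clamp_le (hFφ s))
  rw [Metric.tendsto_atTop]
  intro ε hε
  obtain ⟨K, hKε, hK⟩ := ((tendsto_integral_max_sub_zero_atTop hφ).eventually
    (gt_mem_nhds (by positivity : 0 < ε / 3))).and (eventually_ge_atTop 0) |>.exists
  let FK : BoundedContinuousFunction Ω ℝ := .ofNormedAddCommGroup
    (fun s => max (-K) (min K (F s))) (by fun_prop) K
    fun s => (abs_clamp_le hK).trans (min_le_left _ _)
  obtain ⟨N, hN⟩ := Metric.tendsto_atTop.1 (hweak FK) (ε / 3) (by positivity)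
  refine ⟨N, fun m hm => ?_⟩
  have hP : dist (∫ s, F s ∂P m) (∫ s, FK s ∂P m) ≤ _ := htrunc (P m) (hPX m) K hK
  have hQ : dist (∫ s, F s ∂Q) (∫ s, FK s ∂Q) ≤ _ := htrunc Q hQX K hK
  calc dist (∫ s, F s ∂P m) (∫ s, F s ∂Q)
      ≤ dist (∫ s, F s ∂P m) (∫ s, FK s ∂P m) + dist (∫ s, FK s ∂P m) (∫ s, FK s ∂Q)
        + dist (∫ s, FK s ∂Q) (∫ s, F s ∂Q) := dist_triangle4 _ _ _ _
    _ < ε := by rw [dist_comm (∫ s, FK s ∂Q)]; linarith [hN m hm]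

theorem tendsto_integral_bcf_comp_mul_comp [TopologicalSpace α] [BorelSpace α] {π : Ω → E}
    (hπ : Continuous π) (f : BoundedContinuousFunction E ℝ) {X : Ω → α} (hX : Continuous X)
    {μ : Measure α} (hPX : ∀ m, (P m).map X = μ) (hQX : Q.map X = μ) {w : α → ℝ} (hw : Continuous w) (hwμ : Integrable w μ) :
    Tendsto (fun m => ∫ s, f (π s) * w (X s) ∂P m) atTop (𝓝 (∫ s, f (π s) * w (X s) ∂Q)) :=
  tendsto_integral_of_abs_le_comp hweak hX.measurable hPX hQX (hwμ.abs.const_mul ‖f‖)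
    (by fun_prop) fun s => by
      rw [abs_mul]
      exact mul_le_mul_of_nonneg_right (f.norm_coe_le_norm _) (abs_nonneg _)

theorem map_eq_of_forall_tendsto_integral_bcf [MeasurableSpace E] [HasOuterApproxClosed E]
    [BorelSpace E] [IsFiniteMeasure Q] {X : Ω → E} (hX : Continuous X) {μ : Measure E}
    [IsFiniteMeasure μ] (hPX : ∀ m, (P m).map X = μ) : Q.map X = μ := by
  refine ext_of_forall_integral_eq_of_IsFiniteMeasure fun f => ?_
  have hPf : ∀ m, ∫ s, f (X s) ∂P m = ∫ x, f x ∂μ := fun m => by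
    rw [← hPX m, integral_map hX.measurable.aemeasurable f.continuous.aestronglyMeasurable]
  rw [integral_map hX.measurable.aemeasurable f.continuous.aestronglyMeasurable]
  exact tendsto_nhds_unique ((hweak (f.compContinuous ⟨X, hX⟩)).congr hPf) tendsto_const_nhds

theorem condExp_comap_ae_eq_of_tendsto_of_map_eq [MeasurableSpace E] [HasOuterApproxClosed E]
    [BorelSpace E] [∀ m, IsFiniteMeasure (P m)] [IsFiniteMeasure Q] {π : Ω → E}
    (hπ : Continuous π) {φ : E → ℝ} (hφ : Continuous φ) {Y : Ω → ℝ} (hY : Continuous Y)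
    {μX μY : Measure ℝ} (hμX : Integrable (fun x => x) μX) (hμY : Integrable (fun x => x) μY)
    (hPX : ∀ m, (P m).map (fun s => φ (π s)) = μX) (hQX : Q.map (fun s => φ (π s)) = μX)
    (hPY : ∀ m, (P m).map Y = μY) (hQY : Q.map Y = μY)
    (hP : ∀ m, (P m)[Y | MeasurableSpace.comap π inferInstance] =ᵐ[P m] fun s => φ (π s)) :
    Q[Y | MeasurableSpace.comap π inferInstance] =ᵐ[Q] fun s => φ (π s) :=
  condExp_comap_ae_eq_of_tendsto hπ.measurable
    (fun m => hμY.comp_of_map_eq hY.measurable (hPY m)) (hμY.comp_of_map_eq hY.measurable hQY)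
    hP hφ.measurable (hμX.comp_of_map_eq (hφ.comp hπ).measurable hQX)
    (fun f => tendsto_integral_bcf_comp_mul_comp hweak hπ f hY hPY hQY continuous_id hμY)
    (fun f => tendsto_integral_bcf_comp_mul_comp hweak hπ f (hφ.comp hπ) hPX hQX continuous_id
      hμX)

theorem condExp_comap_ae_eq_of_tendstoLocallyUniformly [∀ m, IsFiniteMeasure (P m)]
    [IsFiniteMeasure Q] {X Y : Ω → ℝ} (hX : Continuous X) (hY : Continuous Y)
    {μX μY : Measure ℝ} (hμX : Integrable (fun x => x) μX) (hPX : ∀ m, (P m).map X = μX)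
    (hQX : Q.map X = μX) (hPY : ∀ m, (P m).map Y = μY) (hQY : Q.map Y = μY) {v : ℝ → ℝ}
    (hv : Continuous v) (hvμ : Integrable v μY) {gN : ℕ → ℝ → ℝ} {g : ℝ → ℝ}
    (hgNlip : ∀ m, LipschitzWith 1 (gN m)) (hgN0 : ∀ m, gN m 0 = 0)
    (hgN : TendstoLocallyUniformly gN g atTop)
    (hP : ∀ m, (P m)[fun s => v (Y s) | MeasurableSpace.comap X inferInstance]
      =ᵐ[P m] fun s => gN m (X s)) :
    Q[fun s => v (Y s) | MeasurableSpace.comap X inferInstance] =ᵐ[Q] fun s => g (X s) := by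
  have hlim : ∀ x, Tendsto (fun m => gN m x) atTop (𝓝 (g x)) := fun x =>
    hgN.tendstoLocallyUniformlyOn.tendsto_at (Set.mem_univ x)
  have hgN_norm : ∀ m x, ‖gN m x‖ ≤ ‖x‖ := fun m x => by
    simpa using (hgNlip m).norm_le_mul (hgN0 m) x
  have hg_norm : ∀ x, ‖g x‖ ≤ ‖x‖ := fun x => le_of_tendsto' (hlim x).norm (hgN_norm · x)
  have hg : Continuous g := hgN.continuous (.of_forall fun m => (hgNlip m).continuous)
  have hgμ : Integrable g μX := hμX.norm.mono' hg.aestronglyMeasurable (.of_forall hg_norm)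
  refine condExp_comap_ae_eq_of_tendsto hX.measurable
    (fun m => hvμ.comp_of_map_eq hY.measurable (hPY m)) (hvμ.comp_of_map_eq hY.measurable hQY)
    hP hg.measurable (hgμ.comp_of_map_eq hX.measurable hQX)
    (fun f => tendsto_integral_bcf_comp_mul_comp hweak hX f hY hPY hQY hv hvμ) fun f => ?_
  have hdist : Tendsto (fun m => dist (∫ s, f (X s) * g (X s) ∂P m)
      (∫ s, f (X s) * gN m (X s) ∂P m)) atTop (𝓝 0) :=
    tendsto_dist_integral_bcf_comp_mul_comp hX.measurable f hX.measurable hPX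
      (fun m => (hgNlip m).continuous.aestronglyMeasurable) (.of_forall hlim) hμX.norm
      hgN_norm hg_norm
  exact (tendsto_integral_bcf_comp_mul_comp hweak hX f hX hPX hQX hg hgμ).congr_dist hdist

end WeakLimits

theorem markov_pricing_rule_closed_general
    {n : ℕ}
    (μ : Fin n → Measure ℝ) (hμprob : ∀ i, IsProbabilityMeasure (μ i))
    (hμmom : ∀ i, Integrable (fun x => x) (μ i))
    (ℱ : Fin n → MeasurableSpace (Fin n → ℝ))
    (hℱ : ∀ i, ℱ i = MeasurableSpace.comap
      (fun (s : Fin n → ℝ) (l : {l : Fin n // l ≤ i}) => s l.1) inferInstance)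
    (QN : ℕ → Measure (Fin n → ℝ)) (hQNprob : ∀ m, IsProbabilityMeasure (QN m))
    (hQNpos : ∀ m, ∀ᵐ s ∂(QN m), ∀ l, 0 ≤ s l)
    (hQNmart : ∀ m, ∀ i j : Fin n, i ≤ j →
      ((QN m)[fun s => s j|ℱ i]) =ᵐ[QN m] fun s => s i)
    (hQNmarg : ∀ m, ∀ i : Fin n, (QN m).map (fun s => s i) = μ i)
    (Q : Measure (Fin n → ℝ)) [IsProbabilityMeasure Q]
    -- weak convergence of `QN` to `Q`
    (hweak : ∀ f : BoundedContinuousFunction (Fin n → ℝ) ℝ,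
      Tendsto (fun m => ∫ s, f s ∂(QN m)) atTop (nhds (∫ s, f s ∂Q)))
    (v : ℝ → ℝ) (hvcont : Continuous v) (hv0 : ∀ x, 0 ≤ v x)
    (hvlin : ∃ C : ℝ, ∀ x : ℝ, 0 ≤ x → v x ≤ C * (1 + x))
    (i j : Fin n)
    (gN : ℕ → ℝ → ℝ) (g : ℝ → ℝ)
    (hgNlip : ∀ m, LipschitzWith 1 (gN m)) (hgN0 : ∀ m, gN m 0 = 0)
    -- `gN m (Sᵢ)` is a version of the conditional expectation given `Sᵢ` under `QN m`
    (hgNce : ∀ m,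
      ((QN m)[fun s => v (s j)|MeasurableSpace.comap (fun s : Fin n → ℝ => s i)
        inferInstance]) =ᵐ[QN m] fun s => gN m (s i))
    -- uniform convergence on compact sets
    (hgconv : ∀ K : Set ℝ, IsCompact K → TendstoUniformlyOn (fun m => gN m) g atTop K) :
    -- the limit measure is again a calibrated martingale measure
    ((∀ i' j' : Fin n, i' ≤ j' → (Q[fun s => s j'|ℱ i']) =ᵐ[Q] fun s => s i') ∧
      (∀ i' : Fin n, Q.map (fun s => s i') = μ i')) ∧
    -- and `g(Sᵢ)` is a version of the conditional expectation under `Q`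
    (Q[fun s => v (s j)|MeasurableSpace.comap (fun s : Fin n → ℝ => s i) inferInstance])
      =ᵐ[Q] fun s => g (s i) := by
  obtain rfl := funext hℱ
  have := hQNprob
  have hcoord : ∀ l : Fin n, Continuous fun s : Fin n → ℝ => s l := continuous_apply
  have hQmarg : ∀ l, Q.map (fun s => s l) = μ l := fun l =>
    have := hμprob l
    map_eq_of_forall_tendsto_integral_bcf hweak (hcoord l) fun m => hQNmarg m l
  refine ⟨⟨fun i' j' hij' => ?_, hQmarg⟩, ?_⟩
  · exact condExp_comap_ae_eq_of_tendsto_of_map_eq hweak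
      (π := fun s (l : {l : Fin n // l ≤ i'}) => s l.1) (by fun_prop)
      (continuous_apply ⟨i', le_rfl⟩) (hcoord j') (hμmom i') (hμmom j')
      (fun m => hQNmarg m i') (hQmarg i') (fun m => hQNmarg m j') (hQmarg j')
      fun m => hQNmart m i' j' hij'
  · obtain ⟨C, hC⟩ := hvlin
    have := hμprob j
    have hμpos : ∀ᵐ x ∂μ j, 0 ≤ x := by
      rw [← hQNmarg 0 j]
      exact (ae_map_iff (measurable_pi_apply j).aemeasurable measurableSet_Ici).2
        ((hQNpos 0).mono fun s hs => hs j)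
    exact condExp_comap_ae_eq_of_tendstoLocallyUniformly hweak (hcoord i) (hcoord j) (hμmom i)
      (fun m => hQNmarg m i) (hQmarg i) (fun m => hQNmarg m j) (hQmarg j) hvcont
      (integrable_of_le_linear (hμmom j) hμpos hvcont.aestronglyMeasurable hv0 hC) hgNlip hgN0
      (tendstoLocallyUniformly_iff_forall_isCompact.2 hgconv) hgNce

/-- Closure property of Markovian pricing rules (Remark 2.12): the weak limit of
martingale measures with fixed marginals is again such a measure, and the locally
uniform limit of the associated 1-Lipschitz conditional pricing functions is a version
of the conditional expectation under the limit measure. -/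
theorem markov_pricing_rule_closed
    {n : ℕ}
    (μ : Fin n → Measure ℝ) (hμprob : ∀ i, IsProbabilityMeasure (μ i))
    (hμmom : ∀ i, Integrable (fun x => x) (μ i))
    (ℱ : Fin n → MeasurableSpace (Fin n → ℝ))
    (hℱ : ∀ i, ℱ i = MeasurableSpace.comap
      (fun (s : Fin n → ℝ) (l : {l : Fin n // l ≤ i}) => s l.1) inferInstance)
    (QN : ℕ → Measure (Fin n → ℝ)) (hQNprob : ∀ m, IsProbabilityMeasure (QN m))
    (hQNpos : ∀ m, ∀ᵐ s ∂(QN m), ∀ l, 0 ≤ s l)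
    (hQNmart : ∀ m, ∀ i j : Fin n, i ≤ j →
      ((QN m)[fun s => s j|ℱ i]) =ᵐ[QN m] fun s => s i)
    (hQNmarg : ∀ m, ∀ i : Fin n, (QN m).map (fun s => s i) = μ i)
    (Q : Measure (Fin n → ℝ)) [IsProbabilityMeasure Q]
    -- weak convergence of `QN` to `Q`
    (hweak : ∀ f : BoundedContinuousFunction (Fin n → ℝ) ℝ,
      Tendsto (fun m => ∫ s, f s ∂(QN m)) atTop (nhds (∫ s, f s ∂Q)))
    (v : ℝ → ℝ) (hvcont : Continuous v) (hv0 : ∀ x, 0 ≤ v x)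
    (hvlin : ∃ C : ℝ, ∀ x : ℝ, 0 ≤ x → v x ≤ C * (1 + x))
    (i j : Fin n) (hij : i ≤ j)
    (gN : ℕ → ℝ → ℝ) (g : ℝ → ℝ)
    (hgNlip : ∀ m, LipschitzWith 1 (gN m)) (hgN0 : ∀ m, gN m 0 = 0)
    (hgNpos : ∀ m x, 0 ≤ gN m x)
    -- `gN m (Sᵢ)` is a version of the conditional expectation given `Sᵢ` under `QN m`
    (hgNce : ∀ m,
      ((QN m)[fun s => v (s j)|MeasurableSpace.comap (fun s : Fin n → ℝ => s i)
        inferInstance]) =ᵐ[QN m] fun s => gN m (s i))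
    -- uniform convergence on compact sets
    (hgconv : ∀ K : Set ℝ, IsCompact K → TendstoUniformlyOn (fun m => gN m) g atTop K) :
    -- the limit measure is again a calibrated martingale measure
    ((∀ i' j' : Fin n, i' ≤ j' → (Q[fun s => s j'|ℱ i']) =ᵐ[Q] fun s => s i') ∧
      (∀ i' : Fin n, Q.map (fun s => s i') = μ i')) ∧
    -- and `g(Sᵢ)` is a version of the conditional expectation under `Q`
    (Q[fun s => v (s j)|MeasurableSpace.comap (fun s : Fin n → ℝ => s i) inferInstance])
      =ᵐ[Q] fun s => g (s i) :=
  markov_pricing_rule_closed_general μ hμprob hμmom ℱ hℱ QN hQNprob hQNpos hQNmart hQNmarg Q hweak v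
    hvcont hv0 hvlin i j gN g hgNlip hgN0 hgNce hgconv
end
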